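/- In the head-coloring model with heads-probability p > 1/2, if the coins at positions i, i+1, ..., i+k-1 are all colored red, then the tosses at positions i+1, ..., i+k-1 are all heads; consequently the probability that a run of k reds starts at a fixed position i is at most p^{k-1}. -/

import Mathlib

open MeasureTheory ProbabilityTheory Filter Finset

/-- `Δ_n`: number of heads minus number of tails among tosses `1, ..., n`. -/
def delta (x : ℕ → Bool) (n : ℕ) : ℤ :=
  ∑ j ∈ Finset.Icc 1 n, (if x j then (1 : ℤ) else -1)

/-- Position `i ∈ {1, ..., N}` is a red head: it is a head, `Δ_j ≥ Δ_i` for all later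
positions `j ≤ N`, and every earlier position `k` with `Δ_k ≥ Δ_i` is followed by some
`l ∈ (k, i)` with `Δ_l < Δ_i`. -/
def IsRed (N : ℕ) (x : ℕ → Bool) (i : ℕ) : Prop :=
  1 ≤ i ∧ i ≤ N ∧ x i = true ∧
  (∀ j, i < j → j ≤ N → delta x i ≤ delta x j) ∧
  (∀ k, 1 ≤ k → k < i → delta x i ≤ delta x k →
    ∃ l, k < l ∧ l < i ∧ delta x l < delta x i)

theorem IsRed.head {N : ℕ} {x : ℕ → Bool} {i : ℕ} (h : IsRed N x i) : x i = true :=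
  h.2.2.1

theorem measure_biInter_eq_pow_of_iIndepFun {ι Ω : Type*} [MeasurableSpace Ω] {μ : Measure Ω}
    {X : ι → Ω → Bool} (hindep : iIndepFun X μ) {q : ENNReal}
    (hdist : ∀ m, μ {ω | X m ω = true} = q) (S : Finset ι) :
    μ (⋂ m ∈ S, {ω | X m ω = true}) = q ^ S.card := by
  rw [hindep.meas_biInter (s := fun m => {ω | X m ω = true}) fun m _ => ⟨{true}, trivial, rfl⟩]
  simp [hdist]

theorem setOf_redRun_subset_biInter_heads {Ω : Type*} (N k i : ℕ) (X : ℕ → Ω → Bool) :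
    {ω | ∀ j < k, IsRed N (fun n => X n ω) (i + j)} ⊆
      ⋂ m ∈ Finset.Ico (i + 1) (i + k), {ω | X m ω = true} := by
  intro ω hω
  simp only [Set.mem_iInter, Finset.mem_Ico]
  intro m hm
  obtain ⟨j, rfl⟩ : ∃ j, m = i + j := ⟨m - i, by omega⟩
  exact (hω j (by omega)).head

theorem stmt6_general {Ω : Type*} [MeasurableSpace Ω] (μ : Measure Ω)
    (p : ℝ) (hp : 1 / 2 < p)
    (N k i : ℕ)
    (X : ℕ → Ω → Bool)
    (hindep : iIndepFun X μ)
    (hdist : ∀ m, μ {ω | X m ω = true} = ENNReal.ofReal p) :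
    (∀ x : ℕ → Bool, (∀ j < k, IsRed N x (i + j)) →
      ∀ j, 1 ≤ j → j < k → x (i + j) = true) ∧
    μ {ω | ∀ j < k, IsRed N (fun n => X n ω) (i + j)} ≤
      ENNReal.ofReal (p ^ (k - 1)) := by
  refine ⟨fun x hred j _ hjk => (hred j hjk).head, ?_⟩
  calc μ {ω | ∀ j < k, IsRed N (fun n => X n ω) (i + j)}
      ≤ μ (⋂ m ∈ Finset.Ico (i + 1) (i + k), {ω | X m ω = true}) :=
        measure_mono (setOf_redRun_subset_biInter_heads N k i X)
    _ = ENNReal.ofReal p ^ (k - 1) := by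
        rw [measure_biInter_eq_pow_of_iIndepFun hindep hdist, Nat.card_Ico]
        congr 1
        omega
    _ = ENNReal.ofReal (p ^ (k - 1)) := (ENNReal.ofReal_pow (by linarith) _).symm

/-- If positions `i, ..., i+k-1` are all red then positions `i+1, ..., i+k-1` are all heads;
consequently, for i.i.d. tosses with heads-probability `p > 1/2`, the probability that a run
of `k` reds starts at a fixed position `i` is at most `p^(k-1)`. -/
theorem stmt6 {Ω : Type*} [MeasurableSpace Ω] (μ : Measure Ω) [IsProbabilityMeasure μ]
    (p : ℝ) (hp : 1 / 2 < p) (hp1 : p ≤ 1)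
    (N k i : ℕ) (hk : 1 ≤ k) (hi : 1 ≤ i) (hiN : i + k - 1 ≤ N)
    (X : ℕ → Ω → Bool) (hX : ∀ m, Measurable (X m))
    (hindep : iIndepFun X μ)
    (hdist : ∀ m, μ {ω | X m ω = true} = ENNReal.ofReal p) :
    (∀ x : ℕ → Bool, (∀ j < k, IsRed N x (i + j)) →
      ∀ j, 1 ≤ j → j < k → x (i + j) = true) ∧
    μ {ω | ∀ j < k, IsRed N (fun n => X n ω) (i + j)} ≤
      ENNReal.ofReal (p ^ (k - 1)) :=
  stmt6_general μ p hp N k i X hindep hdist
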